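/- arXiv:2602.05914 — 3 statements merged into one kernel-verified Lean document; each statement's English description precedes it below -/
import Mathlib

section
/- Fix n qubits and let U = ∏_{j=0}^{n-2} CZ_j be the cluster entangler. Let i ≥ 1 and m ≥ 0 be such that i + 2m + 1 ≤ n - 1, and let S = ∏_{k=0}^{m} X_{i+2k} be the product of single-site Pauli X operators at the sites i, i+2, …, i+2m. Then U * S = (Z_{i-1} * S * Z_{i+2m+1}) * U. -/
open Matrix

/-- The algebra of operators on `n` qubits: matrices indexed by configurations. -/
abbrev QubitOp (n : ℕ) := Matrix ((Fin n) → Fin 2) ((Fin n) → Fin 2) ℂ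

/-- The single-site operator acting as the `2 × 2` matrix `A` at site `j` and
trivially elsewhere. -/
noncomputable def siteOp {n : ℕ} (A : Matrix (Fin 2) (Fin 2) ℂ) (j : Fin n) :
    QubitOp n :=
  fun x y => A (x j) (y j) * ∏ k ∈ Finset.univ.erase j, (if x k = y k then (1 : ℂ) else 0)

/-- The Pauli `X` matrix. -/
def PauliX : Matrix (Fin 2) (Fin 2) ℂ := !![0, 1; 1, 0]

/-- The Pauli `Z` matrix. -/
def PauliZ : Matrix (Fin 2) (Fin 2) ℂ := !![1, 0; 0, -1]

/-- The controlled-Z gate acting on the (ordered) pair of sites `j`, `j'`. -/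
noncomputable def CZ {n : ℕ} (j j' : Fin n) : QubitOp n :=
  Matrix.diagonal (fun x => if x j = 1 ∧ x j' = 1 then (-1 : ℂ) else 1)

/-- The cluster entangler `U = ∏_{j=0}^{n-2} CZ_j` (ordered product of commuting
diagonal matrices). -/
noncomputable def clusterU (n : ℕ) : QubitOp n :=
  (((List.range (n - 1)).attach).map (fun j =>
    CZ (⟨j.1, by have := j.2; rw [List.mem_range] at this; omega⟩ : Fin n)
       (⟨j.1 + 1, by have := j.2; rw [List.mem_range] at this; omega⟩ : Fin n))).prod

/-- The string operator `S = ∏_{k=0}^{m} X_{i+2k}` (ordered product of commuting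
single-site Pauli `X` operators at the sites `i, i+2, …, i+2m`). -/
noncomputable def stringS (n i m : ℕ) (h : i + 2 * m + 1 ≤ n - 1) : QubitOp n :=
  (((List.range (m + 1)).attach).map (fun k =>
    siteOp PauliX
      (⟨i + 2 * k.1, by have := k.2; rw [List.mem_range] at this; omega⟩ : Fin n))).prod

/-!
The cluster entangler is diagonal, `U = diag((-1)^{q(x)})` with the quadratic phase
`q(x) = ∑ⱼ xⱼ xⱼ₊₁` over `𝔽₂`, while `X_b` translates configurations by the unit vector `e_b`.
Since `q(x + e_b) = q(x) + x_{b-1} + x_{b+1}`, conjugating `X_b` by `U` produces `Z_{b-1} X_b Z_{b+1}`.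
Multiplying these relations along the string `i, i+2, …, i+2m`, the `Z`'s at the interior sites
`i+1, i+3, …` appear twice and cancel, leaving only `Z_{i-1}` and `Z_{i+2m+1}`.
-/

open Fin.CommRing

def paritySign (a : Fin 2) : ℂ := if a = 0 then 1 else -1

lemma paritySign_add (a b : Fin 2) : paritySign (a + b) = paritySign a * paritySign b := by
  fin_cases a <;> fin_cases b <;> simp [paritySign]

lemma paritySign_mul_self (a : Fin 2) : paritySign a * paritySign a = 1 := by
  rw [← paritySign_add, CharTwo.add_self_eq_zero]
  rfl

lemma PauliZ_eq_diagonal : PauliZ = diagonal paritySign := by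
  ext a b
  fin_cases a <;> fin_cases b <;> simp [PauliZ, paritySign]

lemma PauliX_apply (a b : Fin 2) : PauliX a b = if b = a + 1 then 1 else 0 := by
  fin_cases a <;> fin_cases b <;> simp [PauliX]

section siteOp

variable {n : ℕ}

lemma siteOp_apply (A : Matrix (Fin 2) (Fin 2) ℂ) (j : Fin n) (x y : Fin n → Fin 2) :
    siteOp A j x y = if ∀ k ≠ j, x k = y k then A (x j) (y j) else 0 := by
  simp only [siteOp, Finset.prod_boole, Finset.mem_erase, Finset.mem_univ, and_true]
  split_ifs <;> simp

lemma siteOp_diagonal (d : Fin 2 → ℂ) (j : Fin n) :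
    siteOp (diagonal d) j = diagonal fun x => d (x j) := by
  ext x y
  rw [siteOp_apply, diagonal_apply, diagonal_apply]
  by_cases hxy : x = y
  · simp [hxy]
  · have : (∀ k ≠ j, x k = y k) → x j ≠ y j := fun h hj =>
      hxy (funext fun k => if hk : k = j then hk ▸ hj else h k hk)
    by_cases h : ∀ k ≠ j, x k = y k
    · simp [hxy, this h]
    · simp [h, hxy]

lemma siteOp_PauliZ_mul_self (j : Fin n) : siteOp PauliZ j * siteOp PauliZ j = 1 := by
  simp only [PauliZ_eq_diagonal, siteOp_diagonal, diagonal_mul_diagonal, paritySign_mul_self,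
    diagonal_one]

lemma siteOp_PauliX_apply (j : Fin n) (x y : Fin n → Fin 2) :
    siteOp PauliX j x y = if y = x + Pi.single j 1 then 1 else 0 := by
  rw [siteOp_apply, PauliX_apply, ← ite_and]
  congr 1
  apply propext
  simp only [funext_iff, Pi.add_apply, Pi.single_apply]
  constructor
  · rintro ⟨h, hj⟩ k
    split_ifs with hk
    · exact hk ▸ hj
    · simp [h k hk]
  · intro h
    refine ⟨fun k hk => by simpa [hk] using (h k).symm, by simpa using h j⟩

end siteOp

section cluster

variable {n : ℕ}

-- Zero-extended to all `t : ℕ`, so that the phase below needs no `Fin` index arithmetic.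
def bit (x : Fin n → Fin 2) (t : ℕ) : Fin 2 := if h : t < n then x ⟨t, h⟩ else 0

def clusterPhase (x : Fin n → Fin 2) : Fin 2 :=
  ∑ t ∈ Finset.range (n - 1), bit x t * bit x (t + 1)

lemma bit_val (x : Fin n → Fin 2) (j : Fin n) : bit x j = x j := by
  simp [bit]

lemma bit_add_single (x : Fin n → Fin 2) (b : Fin n) (t : ℕ) :
    bit (x + Pi.single b 1) t = bit x t + if t = b then 1 else 0 := by
  unfold bit
  split_ifs with ht htb htb <;> simp_all [Fin.ext_iff]

lemma CZ_eq_diagonal (j j' : Fin n) : CZ j j' = diagonal fun x => paritySign (x j * x j') := by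
  unfold CZ
  congr
  funext x
  generalize x j = a, x j' = b
  fin_cases a <;> fin_cases b <;> simp [paritySign]

lemma list_prod_diagonal_paritySign {ι : Type*} (l : List ι) (φ : ι → (Fin n → Fin 2) → Fin 2) :
    (l.map fun t => diagonal fun x => paritySign (φ t x)).prod
      = diagonal fun x => paritySign (l.map (φ · x)).sum := by
  induction l with
  | nil => simp [paritySign]
  | cons t l ih => simp [ih, diagonal_mul_diagonal, paritySign_add]

lemma clusterU_eq_diagonal (n : ℕ) :
    clusterU n = diagonal fun x : Fin n → Fin 2 => paritySign (clusterPhase x) := by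
  unfold clusterU
  rw [List.map_attach_eq_pmap, List.pmap_congr_left _ (q := fun _ => True)
      (H₂ := fun _ _ => trivial) (g := fun t _ =>
      diagonal fun x : Fin n → Fin 2 => paritySign (bit x t * bit x (t + 1))), List.pmap_eq_map,
    list_prod_diagonal_paritySign]
  · rfl
  · intro t ht _ _
    have : t + 1 < n := by grind
    rw [CZ_eq_diagonal]
    simp [bit, this, Nat.lt_of_succ_lt this]

lemma clusterPhase_add_single (x : Fin n → Fin 2) {a b c : Fin n} (hab : (a : ℕ) + 1 = b)
    (hbc : (b : ℕ) + 1 = c) : clusterPhase (x + Pi.single b 1) = clusterPhase x + x a + x c := by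
  have hsucc : ∀ t, t + 1 = (b : ℕ) ↔ t = a := by omega
  have hab' : (a : ℕ) ≠ b := by omega
  have ha : (a : ℕ) < n - 1 := by omega
  have hb : (b : ℕ) < n - 1 := by omega
  simp only [clusterPhase, bit_add_single, add_mul, mul_add, Finset.sum_add_distrib, mul_ite,
    ite_mul, mul_one, one_mul, mul_zero, zero_mul, hsucc, Finset.sum_ite_eq', Finset.mem_range,
    ha, hb, hab', if_true, if_false, add_zero]
  rw [hbc, bit_val, bit_val]
  ring

theorem clusterU_mul_siteOp_PauliX {a b c : Fin n} (hab : (a : ℕ) + 1 = b)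
    (hbc : (b : ℕ) + 1 = c) :
    clusterU n * siteOp PauliX b
      = siteOp PauliZ a * siteOp PauliX b * siteOp PauliZ c * clusterU n := by
  ext x y
  simp only [clusterU_eq_diagonal, PauliZ_eq_diagonal, siteOp_diagonal, diagonal_mul, mul_diagonal,
    siteOp_PauliX_apply]
  split_ifs with hy
  · have hcb : c ≠ b := fun h => by omega
    subst hy
    rw [clusterPhase_add_single x hab hbc, paritySign_add, paritySign_add, Pi.add_apply,
      Pi.single_eq_of_ne hcb, add_zero]
    linear_combination
      (-paritySign (clusterPhase x) * paritySign (x c) ^ 2) * paritySign_mul_self (x a)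
        - paritySign (clusterPhase x) * paritySign_mul_self (x c)
  · simp

end cluster

lemma stringS_zero {n i : ℕ} (h : i + 2 * 0 + 1 ≤ n - 1) :
    stringS n i 0 h = siteOp PauliX ⟨i, by omega⟩ := by
  simp [stringS]

lemma stringS_eq_prod_pmap {n i m : ℕ} (h : i + 2 * m + 1 ≤ n - 1) :
    stringS n i m h = ((List.range (m + 1)).pmap
      (fun k (hk : i + 2 * k < n) => siteOp PauliX ⟨i + 2 * k, hk⟩) fun k hk => by grind).prod := by
  rw [stringS, List.map_attach_eq_pmap]
  exact congrArg _ (List.pmap_congr_left _ fun _ _ _ _ => rfl)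

lemma stringS_succ {n i m : ℕ} (h : i + 2 * (m + 1) + 1 ≤ n - 1) :
    stringS n i (m + 1) h
      = stringS n i m (by omega) * siteOp PauliX ⟨i + 2 * (m + 1), by omega⟩ := by
  rw [stringS_eq_prod_pmap, stringS_eq_prod_pmap]
  simp only [List.range_succ (n := m + 1), List.pmap_append, List.prod_append, List.pmap_cons,
    List.pmap_nil, List.prod_singleton]

/-- For `i ≥ 1` and `m ≥ 0` with `i + 2m + 1 ≤ n - 1`, the cluster
entangler intertwines the string operator `S = ∏_{k=0}^{m} X_{i+2k}` with
`Z_{i-1} S Z_{i+2m+1}`. -/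
theorem statement8
    (n i m : ℕ) (hi : 1 ≤ i) (h : i + 2 * m + 1 ≤ n - 1) :
    clusterU n * stringS n i m h =
      (siteOp PauliZ (⟨i - 1, by omega⟩ : Fin n) * stringS n i m h *
        siteOp PauliZ (⟨i + 2 * m + 1, by omega⟩ : Fin n)) * clusterU n := by
  induction m with
  | zero =>
    rw [stringS_zero]
    exact clusterU_mul_siteOp_PauliX (by simp; omega) rfl
  | succ m ih =>
    rw [stringS_succ, ← mul_assoc, ih (by omega), mul_assoc _ (clusterU n),
      clusterU_mul_siteOp_PauliX (a := ⟨i + 2 * m + 1, by omega⟩)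
        (c := ⟨i + 2 * (m + 1) + 1, by omega⟩) (by simp; omega) rfl]
    simp only [mul_assoc, ← mul_assoc (siteOp PauliZ _) (siteOp PauliZ _),
      siteOp_PauliZ_mul_self, one_mul]
end

section
/- Let H be a complex Hilbert space, let Ω ∈ H with ‖Ω‖ = 1, and let A, B, C : H →L[ℂ] H be unitary operators. Suppose there are c, σ, τ ∈ ℂ such that A (B Ω) = c • Ω, C Ω = Ω, A ∘ C = σ • (C ∘ A) with σ ≠ 1, and B ∘ C = τ • (C ∘ B) with τ ≠ 1. Then |⟪Ω, A (B Ω)⟫ - ⟪Ω, A Ω⟫ · ⟪Ω, B Ω⟫| = 1; that is, the states exhibit maximal correlation between A and B. -/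
/-!
The commutation relation `A C = σ C A` with `C Ω = Ω` forces `⟪Ω, A Ω⟫ = σ ⟪Ω, A Ω⟫`, so both
single expectations vanish when `σ, τ ≠ 1`. What remains is `⟪Ω, A B Ω⟫ = c`, and `|c| = 1`
because `A B` is an isometry and `Ω` a unit vector.
-/

open ContinuousLinearMap

section

variable {𝕜 E : Type*} [RCLike 𝕜] [NormedAddCommGroup E] [InnerProductSpace 𝕜 E] [CompleteSpace E]

lemma adjoint_apply_eq_self_of_apply_eq_self {C : E →L[𝕜] E} (hC : adjoint C ∘L C = 1) {x : E}
    (hCx : C x = x) : adjoint C x = x := by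
  simpa [hCx] using congr($hC x)

lemma inner_apply_self_eq_zero_of_comp_eq_smul_comp {A C : E →L[𝕜] E} {σ : 𝕜} {x : E}
    (hC : adjoint C ∘L C = 1) (hCx : C x = x) (hσ : σ ≠ 1) (hAC : A ∘L C = σ • (C ∘L A)) :
    inner 𝕜 x (A x) = 0 := by
  by_contra hne
  have hfixed : σ * inner 𝕜 x (A x) = inner 𝕜 x (A x) := calc
    σ * inner 𝕜 x (A x) = σ * inner 𝕜 (adjoint C x) (A x) := by
      rw [adjoint_apply_eq_self_of_apply_eq_self hC hCx]
    _ = inner 𝕜 x ((σ • (C ∘L A)) x) := by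
      rw [adjoint_inner_left, smul_apply, inner_smul_right, comp_apply]
    _ = inner 𝕜 x (A x) := by rw [← hAC, comp_apply, hCx]
  exact hσ ((mul_eq_right₀ hne).mp hfixed)

end

/-- Let `Ω` be a unit vector, `A`, `B`, `C` unitaries with
`A (B Ω) = c • Ω`, `C Ω = Ω`, `A ∘ C = σ • (C ∘ A)` with `σ ≠ 1` and
`B ∘ C = τ • (C ∘ B)` with `τ ≠ 1`. Then
`|⟪Ω, A (B Ω)⟫ - ⟪Ω, A Ω⟫ ⟪Ω, B Ω⟫| = 1`: the state exhibits maximal correlation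
between `A` and `B`. -/
theorem statement12
    {H : Type*} [NormedAddCommGroup H] [InnerProductSpace ℂ H] [CompleteSpace H]
    (Ω : H) (hΩ : ‖Ω‖ = 1) (A B C : H →L[ℂ] H)
    (hA : adjoint A ∘L A = 1 ∧ A ∘L adjoint A = 1)
    (hB : adjoint B ∘L B = 1 ∧ B ∘L adjoint B = 1)
    (hC : adjoint C ∘L C = 1 ∧ C ∘L adjoint C = 1)
    (c σ τ : ℂ)
    (hABΩ : A (B Ω) = c • Ω)
    (hCΩ : C Ω = Ω)
    (hσ : σ ≠ 1) (hAC : A ∘L C = σ • (C ∘L A))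
    (hτ : τ ≠ 1) (hBC : B ∘L C = τ • (C ∘L B)) :
    ‖(inner ℂ Ω (A (B Ω)) : ℂ) - (inner ℂ Ω (A Ω) : ℂ) * (inner ℂ Ω (B Ω) : ℂ)‖ = 1 := by
  have hAΩ := inner_apply_self_eq_zero_of_comp_eq_smul_comp hC.1 hCΩ hσ hAC
  have hBΩ := inner_apply_self_eq_zero_of_comp_eq_smul_comp hC.1 hCΩ hτ hBC
  have hc : ‖c‖ = 1 := by
    have hnorm : ‖A (B Ω)‖ = ‖Ω‖ := by
      rw [A.norm_map_iff_adjoint_comp_self.mpr hA.1, B.norm_map_iff_adjoint_comp_self.mpr hB.1]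
    rwa [hABΩ, norm_smul, hΩ, mul_one] at hnorm
  rw [hAΩ, hBΩ, hABΩ, inner_smul_right, inner_self_eq_one_of_norm_eq_one hΩ]
  simpa using hc
end

section
/- Let A be a unital C*-algebra, H a complex Hilbert space, and π : A → (H →L[ℂ] H) a unital star-algebra homomorphism whose commutant is trivial, i.e. every bounded operator T on H satisfying T ∘ π(a) = π(a) ∘ T for all a ∈ A is a scalar multiple of the identity. If Ω, Ω' ∈ H are unit vectors inducing the same state, i.e. ⟪Ω, π(a) Ω⟫ = ⟪Ω', π(a) Ω'⟫ for all a ∈ A, then there exists c ∈ ℂ with |c| = 1 such that Ω' = c • Ω. -/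
/-!
Irreducibility makes every nonzero vector cyclic: the closure of `π(A)Ω` is invariant under `π(A)`
and, `π` being a *-map, so is its orthogonal complement. Hence the orthogonal projection onto it
lies in the commutant, is a scalar, and fixes `Ω`, so it is the identity.

Equal states give `‖π a Ω‖ = ‖π a Ω'‖`, so `π a Ω ↦ π a Ω'` is a well-defined isometry on the dense
subspace `π(A)Ω`. Its continuous extension intertwines `π`, hence is a scalar `c`, and `Ω' = c • Ω`.
-/

open ContinuousLinearMap Module.End

theorem Submodule.commute_starProjection_of_mem_invtSubmodule
    {𝕜 E : Type*} [RCLike 𝕜] [NormedAddCommGroup E] [InnerProductSpace 𝕜 E] [CompleteSpace E]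
    {K : Submodule 𝕜 E} [K.HasOrthogonalProjection] {T : E →L[𝕜] E}
    (hT : K ∈ invtSubmodule T.toLinearMap) (hT' : K ∈ invtSubmodule (adjoint T).toLinearMap) :
    Commute K.starProjection T := by
  rw [IsIdempotentElem.commute_iff K.isIdempotentElem_starProjection, K.range_starProjection,
    K.ker_starProjection]
  exact ⟨hT, orthogonal_mem_invtSubmodule hT'⟩

namespace StarAlgHom

variable {A : Type*} [Ring A] [Algebra ℂ A] [Star A]
  {H : Type*} [NormedAddCommGroup H] [InnerProductSpace ℂ H] [CompleteSpace H]
  (π : A →⋆ₐ[ℂ] (H →L[ℂ] H))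

def HasTrivialCommutant : Prop :=
  ∀ T : H →L[ℂ] H, (∀ a, Commute T (π a)) → ∃ z : ℂ, T = z • 1

noncomputable def orbitMap (v : H) : A →ₗ[ℂ] H :=
  (ContinuousLinearMap.apply ℂ H v).toLinearMap ∘ₗ π.toLinearMap

@[simp]
theorem orbitMap_apply (v : H) (a : A) : π.orbitMap v a = π a v := rfl

theorem apply_apply (a b : A) (v : H) : π a (π b v) = π (a * b) v := by
  rw [map_mul]
  rfl

theorem range_orbitMap_mem_invtSubmodule (v : H) (a : A) :
    LinearMap.range (π.orbitMap v) ∈ invtSubmodule (π a).toLinearMap := by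
  rw [mem_invtSubmodule_iff_forall_mem_of_mem]
  rintro _ ⟨b, rfl⟩
  exact ⟨a * b, (π.apply_apply a b v).symm⟩

theorem adjoint_apply_eq (a : A) : adjoint (π a) = π (star a) := by
  rw [map_star, star_eq_adjoint]

theorem inner_apply_apply_eq (v : H) (a : A) :
    inner ℂ (π a v) (π a v) = inner ℂ v (π (star a * a) v) := by
  rw [← apply_apply, ← adjoint_apply_eq, adjoint_inner_right]

theorem norm_apply_eq_of_inner_apply_eq {Ω Ω' : H}
    (h : ∀ a, inner ℂ Ω (π a Ω) = inner ℂ Ω' (π a Ω')) (a : A) :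
    ‖π a Ω‖ = ‖π a Ω'‖ := by
  rw [norm_eq_sqrt_re_inner (𝕜 := ℂ), norm_eq_sqrt_re_inner (𝕜 := ℂ), inner_apply_apply_eq,
    inner_apply_apply_eq, h]

variable {π}

theorem HasTrivialCommutant.dense_of_mem_invtSubmodule (hπ : π.HasTrivialCommutant)
    {S : Submodule ℂ H} (hS : ∀ a, S ∈ invtSubmodule (π a).toLinearMap) (hS0 : S ≠ ⊥) :
    Dense (S : Set H) := by
  set K := S.topologicalClosure
  have : CompleteSpace K := S.isClosed_topologicalClosure.completeSpace_coe
  have hK (a : A) : K ∈ invtSubmodule (π a).toLinearMap :=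
    S.topologicalClosure_mem_invtSubmodule (hS a)
  obtain ⟨z, hz⟩ := hπ K.starProjection fun a =>
    K.commute_starProjection_of_mem_invtSubmodule (hK a) (π.adjoint_apply_eq a ▸ hK (star a))
  obtain ⟨v, hvS, hv0⟩ := S.exists_mem_ne_zero_of_ne_bot hS0
  have hz1 : z = 1 := by
    have hv : z • v = v := by
      simpa [hz] using K.starProjection_eq_self_iff.mpr (S.le_topologicalClosure hvS)
    have hv1 : (z - 1) • v = 0 := by rw [sub_smul, one_smul, hv, sub_self]
    exact sub_eq_zero.mp ((smul_eq_zero.mp hv1).resolve_right hv0)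
  rw [Submodule.dense_iff_topologicalClosure_eq_top]
  change K = ⊤
  rw [← K.range_starProjection, hz, hz1, one_smul]
  exact LinearMap.range_id

theorem HasTrivialCommutant.denseRange_orbitMap (hπ : π.HasTrivialCommutant) {v : H}
    (hv : v ≠ 0) : DenseRange (π.orbitMap v) := by
  rw [DenseRange, ← LinearMap.coe_range]
  exact hπ.dense_of_mem_invtSubmodule (π.range_orbitMap_mem_invtSubmodule v)
    ((Submodule.ne_bot_iff _).mpr ⟨v, ⟨1, by simp⟩, hv⟩)

theorem exists_commute_apply_eq_of_denseRange {Ω Ω' : H} (hΩ : DenseRange (π.orbitMap Ω))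
    (hle : ∀ a, ‖π a Ω'‖ ≤ ‖π a Ω‖) :
    ∃ U : H →L[ℂ] H, (∀ a, Commute U (π a)) ∧ U Ω = Ω' := by
  have hbound : ∃ C, ∀ a, ‖π.orbitMap Ω' a‖ ≤ C * ‖π.orbitMap Ω a‖ := ⟨1, by simpa using hle⟩
  set U := (π.orbitMap Ω').extendOfNorm (π.orbitMap Ω)
  have hU (a : A) : U (π a Ω) = π a Ω' := LinearMap.extendOfNorm_eq hΩ hbound a
  refine ⟨U, fun a => ?_, by simpa using hU 1⟩
  refine coeFn_injective <|
    hΩ.equalizer (U * π a).continuous (π a * U).continuous (funext fun b => ?_)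
  change U (π a (π b Ω)) = π a (U (π b Ω))
  rw [hU, apply_apply, hU, apply_apply]

end StarAlgHom

theorem statement13_general
    {A : Type*} [NormedRing A] [StarRing A] [NormedAlgebra ℂ A]
    {H : Type*} [NormedAddCommGroup H] [InnerProductSpace ℂ H] [CompleteSpace H]
    (π : A →⋆ₐ[ℂ] (H →L[ℂ] H))
    (hirr : ∀ T : H →L[ℂ] H, (∀ a : A, T ∘L π a = π a ∘L T) → ∃ z : ℂ, T = z • 1)
    (Ω Ω' : H) (hΩ : ‖Ω‖ = 1) (hΩ' : ‖Ω'‖ = 1)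
    (hstate : ∀ a : A, (inner ℂ Ω (π a Ω) : ℂ) = inner ℂ Ω' (π a Ω')) :
    ∃ c : ℂ, ‖c‖ = 1 ∧ Ω' = c • Ω := by
  have hπ : π.HasTrivialCommutant := hirr
  have hΩ0 : Ω ≠ 0 := norm_ne_zero_iff.mp (by rw [hΩ]; exact one_ne_zero)
  obtain ⟨U, hU, hUΩ⟩ := StarAlgHom.exists_commute_apply_eq_of_denseRange
    (hπ.denseRange_orbitMap hΩ0) fun a => (π.norm_apply_eq_of_inner_apply_eq hstate a).ge
  obtain ⟨c, rfl⟩ := hπ U hU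
  have hΩ'c : Ω' = c • Ω := by simpa using hUΩ.symm
  refine ⟨c, ?_, hΩ'c⟩
  rw [← hΩ', hΩ'c, norm_smul, hΩ, mul_one]

/-- Let `π` be a unital star-algebra representation of a unital
C*-algebra `A` on a complex Hilbert space `H` with trivial commutant (i.e. an
irreducible representation). If two unit vectors `Ω`, `Ω'` induce the same state,
then they agree up to a phase. -/
theorem statement13
    {A : Type*} [NormedRing A] [StarRing A] [CStarRing A] [CompleteSpace A]
    [NormedAlgebra ℂ A] [StarModule ℂ A]
    {H : Type*} [NormedAddCommGroup H] [InnerProductSpace ℂ H] [CompleteSpace H]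
    (π : A →⋆ₐ[ℂ] (H →L[ℂ] H))
    (hirr : ∀ T : H →L[ℂ] H, (∀ a : A, T ∘L π a = π a ∘L T) → ∃ z : ℂ, T = z • 1)
    (Ω Ω' : H) (hΩ : ‖Ω‖ = 1) (hΩ' : ‖Ω'‖ = 1)
    (hstate : ∀ a : A, (inner ℂ Ω (π a Ω) : ℂ) = inner ℂ Ω' (π a Ω')) :
    ∃ c : ℂ, ‖c‖ = 1 ∧ Ω' = c • Ω :=
  statement13_general π hirr Ω Ω' hΩ hΩ' hstate
end
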